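/- arXiv:2309.05184 — 2 statements merged into one kernel-verified Lean document; each statement's English description precedes it below -/
import Mathlib

section
/- Let N ≥ 1 and let Q be a symmetric 3N×3N real matrix. Suppose X* is SDP-feasible, X* minimizes trace(QX) over all SDP-feasible X, and X* = (R*)ᵀ R* for some matrix R* ∈ ℝ^{3×3N}. Then every 3×3 block of R* belongs to sO(3), and R* is a global minimizer of trace(Q RᵀR) over all R ∈ ℝ^{3×3N} whose 3×3 blocks belong to sO(3). -/
open Matrix

/-- The `i`-th 3×3 block of a 3×3N matrix. -/
def blk {N : ℕ} (R : Matrix (Fin 3) (Fin N × Fin 3) ℝ) (i : Fin N) :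
    Matrix (Fin 3) (Fin 3) ℝ := fun a b => R a (i, b)

/-- Membership in sO(3): a nonnegative multiple of an orthogonal matrix. -/
def sO3 (M : Matrix (Fin 3) (Fin 3) ℝ) : Prop :=
  ∃ (s : ℝ) (Q : Matrix (Fin 3) (Fin 3) ℝ), 0 ≤ s ∧ Qᵀ * Q = 1 ∧ M = s • Q

/-- SDP feasibility: positive semidefinite with scaled-identity 3×3 diagonal blocks. -/
def SDPfeas {N : ℕ} (X : Matrix (Fin N × Fin 3) (Fin N × Fin 3) ℝ) : Prop :=
  X.PosSemidef ∧ ∀ i : Fin N, ∃ α : ℝ, ∀ a b : Fin 3,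
    X (i, a) (i, b) = if a = b then α else 0

/-!
The SDP is a relaxation of the problem over block matrices with blocks in sO(3): the Gram
matrix `RᵀR` is always positive semidefinite, and its `i`-th diagonal block `BᵢᵀBᵢ` is a
multiple of the identity exactly when `Bᵢ` is a nonnegative multiple of an orthogonal matrix.
So a factorization `X* = (R*)ᵀR*` of an SDP optimum is feasible for the original problem, and
its value is a lower bound for every feasible `R`.
-/

theorem exists_smul_orthogonal_iff_transpose_mul_self_eq_smul_one {n : Type*} [Fintype n]
    [DecidableEq n] (B : Matrix n n ℝ) :
    (∃ (s : ℝ) (Q : Matrix n n ℝ), 0 ≤ s ∧ Qᵀ * Q = 1 ∧ B = s • Q) ↔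
      ∃ α : ℝ, Bᵀ * B = α • 1 := by
  constructor
  · rintro ⟨s, Q, -, hQ, rfl⟩
    exact ⟨s * s, by rw [transpose_smul, Matrix.smul_mul, Matrix.mul_smul, hQ, smul_smul]⟩
  · rintro ⟨α, hα⟩
    by_cases hB : B = 0
    · exact ⟨0, 1, le_rfl, by simp, by simp [hB]⟩
    obtain ⟨k, a, hka⟩ : ∃ k a, B k a ≠ 0 := by
      by_contra! h
      exact hB (Matrix.ext h)
    -- `α` is the squared norm of the nonzero column `a` of `B`.
    have hα_pos : 0 < α := by
      have hcol : ∑ j, B j a * B j a = α := by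
        simpa [mul_apply] using congrFun (congrFun hα a) a
      rw [← hcol]
      exact lt_of_lt_of_le (mul_self_pos.mpr hka)
        (Finset.single_le_sum (fun j _ => mul_self_nonneg (B j a)) (Finset.mem_univ k))
    have hs : Real.sqrt α ≠ 0 := (Real.sqrt_pos.mpr hα_pos).ne'
    refine ⟨Real.sqrt α, (Real.sqrt α)⁻¹ • B, Real.sqrt_nonneg α, ?_, ?_⟩
    · rw [transpose_smul, Matrix.smul_mul, Matrix.mul_smul, hα, smul_smul, smul_smul, ← mul_inv,
        Real.mul_self_sqrt hα_pos.le, inv_mul_cancel₀ hα_pos.ne', one_smul]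
    · rw [smul_smul, mul_inv_cancel₀ hs, one_smul]

theorem sO3_iff_transpose_mul_self_eq_smul_one (B : Matrix (Fin 3) (Fin 3) ℝ) :
    sO3 B ↔ ∃ α : ℝ, Bᵀ * B = α • 1 :=
  exists_smul_orthogonal_iff_transpose_mul_self_eq_smul_one B

theorem transpose_mul_self_diag_block {N : ℕ} (R : Matrix (Fin 3) (Fin N × Fin 3) ℝ)
    (i : Fin N) (a b : Fin 3) :
    (Rᵀ * R) (i, a) (i, b) = ((blk R i)ᵀ * blk R i) a b := by
  simp [mul_apply, blk]

theorem SDPfeas_transpose_mul_self_iff {N : ℕ} (R : Matrix (Fin 3) (Fin N × Fin 3) ℝ) :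
    SDPfeas (Rᵀ * R) ↔ ∀ i, sO3 (blk R i) := by
  have hpsd : (Rᵀ * R).PosSemidef := by
    simpa using posSemidef_conjTranspose_mul_self R
  have hblock : ∀ (i : Fin N) (α : ℝ), (∀ a b : Fin 3,
      (Rᵀ * R) (i, a) (i, b) = if a = b then α else 0) ↔ (blk R i)ᵀ * blk R i = α • 1 := by
    intro i α
    simp only [transpose_mul_self_diag_block, ← Matrix.ext_iff, Matrix.smul_apply, one_apply,
      smul_eq_mul, mul_ite, mul_one, mul_zero]
  simp only [SDPfeas, hpsd, hblock, sO3_iff_transpose_mul_self_eq_smul_one, true_and]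

theorem stmt6_general (N : ℕ)
    (Q : Matrix (Fin N × Fin 3) (Fin N × Fin 3) ℝ)
    (Xstar : Matrix (Fin N × Fin 3) (Fin N × Fin 3) ℝ)
    (hfeas : SDPfeas Xstar)
    (hmin : ∀ X : Matrix (Fin N × Fin 3) (Fin N × Fin 3) ℝ,
      SDPfeas X → (Q * Xstar).trace ≤ (Q * X).trace)
    (Rstar : Matrix (Fin 3) (Fin N × Fin 3) ℝ)
    (hfac : Xstar = Rstarᵀ * Rstar) :
    (∀ i, sO3 (blk Rstar i)) ∧
    ∀ R : Matrix (Fin 3) (Fin N × Fin 3) ℝ, (∀ i, sO3 (blk R i)) →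
      (Q * (Rstarᵀ * Rstar)).trace ≤ (Q * (Rᵀ * R)).trace := by
  subst hfac
  exact ⟨(SDPfeas_transpose_mul_self_iff Rstar).mp hfeas,
    fun R hR => hmin _ ((SDPfeas_transpose_mul_self_iff R).mpr hR)⟩

/-- If an SDP-feasible minimizer `X*` of `trace(QX)` factors as `X* = (R*)ᵀR*`, then all
3×3 blocks of `R*` lie in sO(3) and `R*` minimizes `trace(Q RᵀR)` over all block matrices
with blocks in sO(3). -/
theorem stmt6 (N : ℕ) (hN : 1 ≤ N)
    (Q : Matrix (Fin N × Fin 3) (Fin N × Fin 3) ℝ) (hQ : Qᵀ = Q)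
    (Xstar : Matrix (Fin N × Fin 3) (Fin N × Fin 3) ℝ)
    (hfeas : SDPfeas Xstar)
    (hmin : ∀ X : Matrix (Fin N × Fin 3) (Fin N × Fin 3) ℝ,
      SDPfeas X → (Q * Xstar).trace ≤ (Q * X).trace)
    (Rstar : Matrix (Fin 3) (Fin N × Fin 3) ℝ)
    (hfac : Xstar = Rstarᵀ * Rstar) :
    (∀ i, sO3 (blk Rstar i)) ∧
    ∀ R : Matrix (Fin 3) (Fin N × Fin 3) ℝ, (∀ i, sO3 (blk R i)) →
      (Q * (Rstarᵀ * Rstar)).trace ≤ (Q * (Rᵀ * R)).trace :=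
  stmt6_general N Q Xstar hfeas hmin Rstar hfac
end

section
/- With G, weights, vectors, and the matrices Q₁ ∈ ℝ^{N×N}, Q₂ ∈ ℝ^{3N×3N}, V ∈ ℝ^{3N×N} defined as in the quadratic-form identity for the objective L(t, r) = tᵀ(Q₁ ⊗ I₃)t + 2rᵀ(V ⊗ I₃)t + rᵀ(Q₂ ⊗ I₃)r, let Q̄₁ ∈ ℝ^{N×(N−1)} consist of the last N−1 columns of Q₁ and assume Q̄₁ᵀQ̄₁ is invertible. Define A = [0_{1×3N}; −(Q̄₁ᵀQ̄₁)^{−1} Q̄₁ᵀ Vᵀ] ∈ ℝ^{N×3N} and Q = AᵀQ₁A + VA + AᵀVᵀ + Q₂ ∈ ℝ^{3N×3N}. Then for every M = [M₁, …, M_N] ∈ ℝ^{3×3N} with r = [vec(M₁); …; vec(M_N)], the vector t* = (A ⊗ I₃) r minimizes L(t, r) over all t = [t₁; …; t_N] ∈ ℝ^{3N} with t₁ = 0, and the minimum value equals trace(Q MᵀM). -/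
open Matrix Kronecker

/-- The matrix `W_e (e_iᵀ − e_jᵀ)` for an edge `e = (i, j)`. -/
noncomputable def Dmat {N : ℕ} (n : Fin N × Fin N → ℕ)
    (w : (e : Fin N × Fin N) → Fin (n e) → ℝ) (e : Fin N × Fin N) :
    Matrix (Fin (n e)) (Fin N) ℝ :=
  fun k v => Real.sqrt (w e k) *
    ((if v = e.1 then 1 else 0) - (if v = e.2 then 1 else 0))

/-- The matrix `e_iᵀ ⊗ P_{e,i}ᵀ − e_jᵀ ⊗ P_{e,j}ᵀ` for an edge `e = (i, j)`. -/
noncomputable def Gmat {N : ℕ} (n : Fin N × Fin N → ℕ)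
    (w : (e : Fin N × Fin N) → Fin (n e) → ℝ)
    (u v : (e : Fin N × Fin N) → Fin (n e) → Fin 3 → ℝ) (e : Fin N × Fin N) :
    Matrix (Fin (n e)) (Fin N × Fin 3) ℝ :=
  fun k p => (if p.1 = e.1 then 1 else 0) * (Real.sqrt (w e k) * u e k p.2)
           - (if p.1 = e.2 then 1 else 0) * (Real.sqrt (w e k) * v e k p.2)

/-- `Q₁ = Σ_e (W_e e_iᵀ − W_e e_jᵀ)ᵀ(W_e e_iᵀ − W_e e_jᵀ)`. -/
noncomputable def Q1 {N : ℕ} (E : Finset (Fin N × Fin N)) (n : Fin N × Fin N → ℕ)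
    (w : (e : Fin N × Fin N) → Fin (n e) → ℝ) : Matrix (Fin N) (Fin N) ℝ :=
  ∑ e ∈ E, (Dmat n w e)ᵀ * Dmat n w e

/-- `Q₂ = Σ_e (e_iᵀ⊗P_{e,i}ᵀ − e_jᵀ⊗P_{e,j}ᵀ)ᵀ(e_iᵀ⊗P_{e,i}ᵀ − e_jᵀ⊗P_{e,j}ᵀ)`. -/
noncomputable def Q2 {N : ℕ} (E : Finset (Fin N × Fin N)) (n : Fin N × Fin N → ℕ)
    (w : (e : Fin N × Fin N) → Fin (n e) → ℝ)
    (u v : (e : Fin N × Fin N) → Fin (n e) → Fin 3 → ℝ) :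
    Matrix (Fin N × Fin 3) (Fin N × Fin 3) ℝ :=
  ∑ e ∈ E, (Gmat n w u v e)ᵀ * Gmat n w u v e

/-- `V = Σ_e (e_iᵀ⊗P_{e,i}ᵀ − e_jᵀ⊗P_{e,j}ᵀ)ᵀ(W_e e_iᵀ − W_e e_jᵀ)`. -/
noncomputable def Vmat {N : ℕ} (E : Finset (Fin N × Fin N)) (n : Fin N × Fin N → ℕ)
    (w : (e : Fin N × Fin N) → Fin (n e) → ℝ)
    (u v : (e : Fin N × Fin N) → Fin (n e) → Fin 3 → ℝ) :
    Matrix (Fin N × Fin 3) (Fin N) ℝ :=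
  ∑ e ∈ E, (Gmat n w u v e)ᵀ * Dmat n w e

/-- The objective `L(t, r) = tᵀ(Q₁⊗I₃)t + 2rᵀ(V⊗I₃)t + rᵀ(Q₂⊗I₃)r`. -/
noncomputable def Lobj {N : ℕ} (E : Finset (Fin N × Fin N)) (n : Fin N × Fin N → ℕ)
    (w : (e : Fin N × Fin N) → Fin (n e) → ℝ)
    (u v : (e : Fin N × Fin N) → Fin (n e) → Fin 3 → ℝ)
    (t : Fin N × Fin 3 → ℝ) (r : (Fin N × Fin 3) × Fin 3 → ℝ) : ℝ :=
  t ⬝ᵥ ((Q1 E n w ⊗ₖ (1 : Matrix (Fin 3) (Fin 3) ℝ)).mulVec t) +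
    2 * (r ⬝ᵥ ((Vmat E n w u v ⊗ₖ (1 : Matrix (Fin 3) (Fin 3) ℝ)).mulVec t)) +
    r ⬝ᵥ ((Q2 E n w u v ⊗ₖ (1 : Matrix (Fin 3) (Fin 3) ℝ)).mulVec r)

/-- `Q̄₁`: the last `N − 1` columns of `Q₁`. -/
noncomputable def Q1bar {N : ℕ} (E : Finset (Fin N × Fin N)) (n : Fin N × Fin N → ℕ)
    (w : (e : Fin N × Fin N) → Fin (n e) → ℝ) :
    Matrix (Fin N) (Fin (N - 1)) ℝ :=
  fun i j => Q1 E n w i ⟨j.val + 1, by omega⟩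

/-- `A = [0_{1×3N}; −(Q̄₁ᵀQ̄₁)⁻¹ Q̄₁ᵀ Vᵀ]`. -/
noncomputable def Amat {N : ℕ} (E : Finset (Fin N × Fin N)) (n : Fin N × Fin N → ℕ)
    (w : (e : Fin N × Fin N) → Fin (n e) → ℝ)
    (u v : (e : Fin N × Fin N) → Fin (n e) → Fin 3 → ℝ) :
    Matrix (Fin N) (Fin N × Fin 3) ℝ :=
  fun i p =>
    if h : (i : ℕ) = 0 then 0
    else (-(((Q1bar E n w)ᵀ * Q1bar E n w)⁻¹ * (Q1bar E n w)ᵀ * (Vmat E n w u v)ᵀ))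
      ⟨(i : ℕ) - 1, by omega⟩ p


noncomputable def Ymat (N : ℕ) : Matrix (Fin (N - 1)) (Fin N) ℝ :=
  fun j c => if (c : ℕ) = 0 then -1 else if (c : ℕ) = (j : ℕ) + 1 then 1 else 0

section Core
variable {N : ℕ} (E : Finset (Fin N × Fin N)) (n : Fin N × Fin N → ℕ)
  (w : (e : Fin N × Fin N) → Fin (n e) → ℝ)
  (u v : (e : Fin N × Fin N) → Fin (n e) → Fin 3 → ℝ)

lemma Q1_symm : (Q1 E n w)ᵀ = Q1 E n w := by
  simp [Q1, Matrix.transpose_sum, Matrix.transpose_mul]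

lemma D_rowsum (e : Fin N × Fin N) (k : Fin (n e)) : ∑ j, Dmat n w e k j = 0 := by
  simp [Dmat, ← Finset.mul_sum, Finset.sum_sub_distrib]

lemma Q1_rowsum (i : Fin N) : ∑ j, Q1 E n w i j = 0 := by
  unfold Q1
  simp only [Matrix.sum_apply, Matrix.mul_apply, Matrix.transpose_apply]
  rw [Finset.sum_comm]
  refine Finset.sum_eq_zero fun e _ => ?_
  rw [Finset.sum_comm]
  refine Finset.sum_eq_zero fun k _ => ?_
  rw [← Finset.mul_sum, D_rowsum, mul_zero]

end Core

lemma Q1bar_sum {m : ℕ} (E : Finset (Fin (m+1) × Fin (m+1))) (n : Fin (m+1) × Fin (m+1) → ℕ)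
    (w : (e : Fin (m+1) × Fin (m+1)) → Fin (n e) → ℝ) (i : Fin (m+1)) :
    ∑ j, Q1bar E n w i j = ∑ j : Fin m, Q1 E n w i j.succ := rfl

lemma Q1_factor {m : ℕ} (E : Finset (Fin (m+1) × Fin (m+1))) (n : Fin (m+1) × Fin (m+1) → ℕ)
    (w : (e : Fin (m+1) × Fin (m+1)) → Fin (n e) → ℝ) :
    Q1bar E n w * Ymat (m+1) = Q1 E n w := by
  ext i c
  rw [Matrix.mul_apply]
  have hcast : ∀ f : Fin (m+1-1) → ℝ, ∑ j : Fin (m+1-1), f j = ∑ j : Fin m, f ⟨j, by omega⟩ :=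
    fun f => rfl
  induction c using Fin.cases with
  | zero =>
      have h := Q1_rowsum E n w i
      rw [Fin.sum_univ_succ] at h
      have hy : ∀ j : Fin (m+1-1), Ymat (m+1) j (0 : Fin (m+1)) = -1 := by
        intro j; simp [Ymat]
      simp only [hy, mul_neg_one]
      rw [Finset.sum_neg_distrib, Q1bar_sum]
      linarith
  | succ j =>
      rw [hcast]
      rw [Finset.sum_eq_single j]
      · have hy : Ymat (m+1) ⟨(j:ℕ), by omega⟩ j.succ = 1 := by
          simp [Ymat]
        rw [hy, mul_one]
        rfl
      · intro b _ hb
        have hne : ¬((j.succ : Fin (m+1)) : ℕ) = (b : ℕ) + 1 := by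
          simp only [Fin.val_succ]
          intro h; exact hb (Fin.ext (by omega))
        have h1 : ¬((j.succ : Fin (m+1)) : ℕ) = 0 := by simp
        simp only [Ymat]
        rw [if_neg h1, if_neg hne, mul_zero]
      · intro habs; exact absurd (Finset.mem_univ _) habs

lemma trace_mul_transpose_self {I J : Type*} [Fintype I] [Fintype J] (M : Matrix I J ℝ) :
    (M * Mᵀ).trace = ∑ i, ∑ k, (M i k) ^ 2 := by
  simp [Matrix.trace, Matrix.diag, Matrix.mul_apply, sq]

lemma key_eq {m : ℕ} (E : Finset (Fin (m+1) × Fin (m+1))) (n : Fin (m+1) × Fin (m+1) → ℕ)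
    (w : (e : Fin (m+1) × Fin (m+1)) → Fin (n e) → ℝ)
    (u v : (e : Fin (m+1) × Fin (m+1)) → Fin (n e) → Fin 3 → ℝ)
    (hinv : IsUnit ((Q1bar E n w)ᵀ * Q1bar E n w).det) :
    Q1 E n w * Amat E n w u v = -(Vmat E n w u v)ᵀ := by
  set B := Q1bar E n w with hB
  set S := Bᵀ * B with hS
  set V' := Vmat E n w u v with hV'
  set P := B * S⁻¹ * Bᵀ with hP
  have hPB : P * B = B := by
    rw [hP, Matrix.mul_assoc (B * S⁻¹) Bᵀ B, ← hS, Matrix.mul_assoc B S⁻¹ S,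
      Matrix.nonsing_inv_mul S hinv, Matrix.mul_one]
  have hPQ1 : P * Q1 E n w = Q1 E n w := by
    rw [← Q1_factor E n w, ← Matrix.mul_assoc, hPB]
  have hSymmS : Sᵀ = S := by rw [hS, Matrix.transpose_mul, Matrix.transpose_transpose]
  have hPt : Pᵀ = P := by
    rw [hP, Matrix.transpose_mul, Matrix.transpose_mul, Matrix.transpose_transpose,
      Matrix.transpose_nonsing_inv, hSymmS, ← Matrix.mul_assoc]
  have hRQ : (1 - P) * Q1 E n w = 0 := by rw [Matrix.sub_mul, Matrix.one_mul, hPQ1, sub_self]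
  have hsum : ∑ e ∈ E, ((1 - P) * (Dmat n w e)ᵀ) * ((1 - P) * (Dmat n w e)ᵀ)ᵀ = 0 := by
    have h0 : (1 - P) * Q1 E n w * (1 - P)ᵀ = 0 := by rw [hRQ, Matrix.zero_mul]
    rw [← h0]
    unfold Q1
    rw [Finset.mul_sum, Finset.sum_mul]
    refine Finset.sum_congr rfl fun e _ => ?_
    simp only [Matrix.transpose_mul, Matrix.transpose_transpose, Matrix.mul_assoc]
  have hzero : ∀ e ∈ E, (1 - P) * (Dmat n w e)ᵀ = 0 := by
    have htr : ∑ e ∈ E, ∑ i, ∑ k, ((((1 - P) * (Dmat n w e)ᵀ : Matrix (Fin (m+1)) (Fin (n e)) ℝ)) i k) ^ 2 = 0 := by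
      have h1 := congrArg Matrix.trace hsum
      rw [Matrix.trace_sum, Matrix.trace_zero] at h1
      rw [← h1]
      exact Finset.sum_congr rfl fun e _ => (trace_mul_transpose_self _).symm
    intro e he
    ext i k
    have h2 := (Finset.sum_eq_zero_iff_of_nonneg
      (fun e _ => Finset.sum_nonneg fun i _ => Finset.sum_nonneg fun k _ => sq_nonneg _)).1
      htr e he
    have h3 := (Finset.sum_eq_zero_iff_of_nonneg
      (fun i _ => Finset.sum_nonneg fun k _ => sq_nonneg _)).1 h2 i (Finset.mem_univ i)
    have h4 := (Finset.sum_eq_zero_iff_of_nonneg (fun k _ => sq_nonneg _)).1 h3 k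
      (Finset.mem_univ k)
    simpa using pow_eq_zero_iff (n := 2) (by norm_num) |>.1 h4
  have hVt : V'ᵀ = ∑ e ∈ E, (Dmat n w e)ᵀ * Gmat n w u v e := by
    rw [hV']
    unfold Vmat
    rw [Matrix.transpose_sum]
    exact Finset.sum_congr rfl fun e _ => by
      rw [Matrix.transpose_mul, Matrix.transpose_transpose]
  have hPV : P * V'ᵀ = V'ᵀ := by
    have h5 : (1 - P) * V'ᵀ = 0 := by
      rw [hVt, Matrix.mul_sum]
      refine Finset.sum_eq_zero fun e he => ?_
      rw [← Matrix.mul_assoc, hzero e he, Matrix.zero_mul]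
    rw [Matrix.sub_mul, Matrix.one_mul] at h5
    exact (sub_eq_zero.1 h5).symm
  -- now compute Q1 * A
  have hQA : Q1 E n w * Amat E n w u v = B * (-(S⁻¹ * Bᵀ * V'ᵀ)) := by
    ext i p
    rw [Matrix.mul_apply, Matrix.mul_apply, Fin.sum_univ_succ]
    have hA0 : Amat E n w u v 0 p = 0 := by
      unfold Amat
      simp
    rw [hA0, mul_zero, zero_add]
    have hcast : ∀ f : Fin (m+1-1) → ℝ, ∑ j : Fin (m+1-1), f j = ∑ j : Fin m, f ⟨j, by omega⟩ :=
      fun f => rfl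
    rw [hcast]
    refine Finset.sum_congr rfl fun j _ => ?_
    have hAj : Amat E n w u v j.succ p = (-(S⁻¹ * Bᵀ * V'ᵀ)) ⟨(j : ℕ), by omega⟩ p := by
      unfold Amat
      rw [dif_neg (by simp : ¬((j.succ : Fin (m+1)) : ℕ) = 0)]
      rfl
    rw [hAj]
    rfl
  rw [hQA, Matrix.mul_neg, ← Matrix.mul_assoc, ← Matrix.mul_assoc, ← hP, hPV]

lemma kron_mulVec3 {α β : Type*} [Fintype β] [DecidableEq β]
    (Q : Matrix α β ℝ) (y : β × Fin 3 → ℝ) (i : α) (c : Fin 3) :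
    (Q ⊗ₖ (1 : Matrix (Fin 3) (Fin 3) ℝ)).mulVec y (i, c) =
      Q.mulVec (fun j => y (j, c)) i := by
  simp [Matrix.mulVec, dotProduct, Fintype.sum_prod_type, Matrix.one_apply,
    mul_ite, ite_mul, mul_assoc]

lemma kron_quad3 {α β : Type*} [Fintype α] [Fintype β] [DecidableEq β]
    (Q : Matrix α β ℝ) (x : α × Fin 3 → ℝ) (y : β × Fin 3 → ℝ) :
    x ⬝ᵥ (Q ⊗ₖ (1 : Matrix (Fin 3) (Fin 3) ℝ)).mulVec y =
      ∑ c : Fin 3, (fun i => x (i, c)) ⬝ᵥ Q.mulVec (fun j => y (j, c)) := by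
  simp only [dotProduct, Fintype.sum_prod_type, kron_mulVec3]
  rw [Finset.sum_comm]

lemma quad_identity {I J : Type*} [Fintype I] [Fintype J]
    (Q1' : Matrix I I ℝ) (V' : Matrix J I ℝ) (Q2' : Matrix J J ℝ) (A : Matrix I J ℝ)
    (hsymm : Q1'ᵀ = Q1') (hK : Q1' * A = -V'ᵀ)
    (x : I → ℝ) (y : J → ℝ) :
    x ⬝ᵥ Q1'.mulVec x + 2 * (y ⬝ᵥ V'.mulVec x) + y ⬝ᵥ Q2'.mulVec y
      = ((x - A.mulVec y) ⬝ᵥ Q1'.mulVec (x - A.mulVec y))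
        + y ⬝ᵥ ((Aᵀ * Q1' * A + V' * A + Aᵀ * V'ᵀ + Q2').mulVec y) := by
  set z := A.mulVec y with hz
  have f1 : Q1'.mulVec z = -(V'ᵀ.mulVec y) := by
    rw [hz, Matrix.mulVec_mulVec, hK, Matrix.neg_mulVec]
  have fswap : ∀ (a : I → ℝ) (b : J → ℝ), a ⬝ᵥ V'ᵀ.mulVec b = b ⬝ᵥ V'.mulVec a := by
    intro a b
    rw [Matrix.dotProduct_mulVec, Matrix.vecMul_transpose, dotProduct_comm]
  have fsymm : x ⬝ᵥ Q1'.mulVec z = z ⬝ᵥ Q1'.mulVec x := by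
    rw [Matrix.dotProduct_mulVec, ← Matrix.mulVec_transpose, hsymm, dotProduct_comm]
  have fA : ∀ c : I → ℝ, y ⬝ᵥ Aᵀ.mulVec c = z ⬝ᵥ c := by
    intro c; rw [Matrix.dotProduct_mulVec, Matrix.vecMul_transpose]
  have e1 : y ⬝ᵥ (Aᵀ * Q1' * A).mulVec y = z ⬝ᵥ Q1'.mulVec z := by
    rw [Matrix.mul_assoc, ← Matrix.mulVec_mulVec, fA, ← Matrix.mulVec_mulVec, ← hz]
  have e2 : y ⬝ᵥ (V' * A).mulVec y = y ⬝ᵥ V'.mulVec z := by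
    rw [← Matrix.mulVec_mulVec, hz]
  have e3 : y ⬝ᵥ (Aᵀ * V'ᵀ).mulVec y = y ⬝ᵥ V'.mulVec z := by
    rw [← Matrix.mulVec_mulVec, fA, fswap]
  have e4 : z ⬝ᵥ Q1'.mulVec z = -(y ⬝ᵥ V'.mulVec z) := by
    rw [f1, dotProduct_neg, fswap]
  have e5 : x ⬝ᵥ Q1'.mulVec z = -(y ⬝ᵥ V'.mulVec x) := by
    rw [f1, dotProduct_neg, fswap]
  have e6 : z ⬝ᵥ Q1'.mulVec x = -(y ⬝ᵥ V'.mulVec x) := by rw [← fsymm, e5]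
  rw [Matrix.mulVec_sub, dotProduct_sub, sub_dotProduct, sub_dotProduct,
    Matrix.add_mulVec, Matrix.add_mulVec, Matrix.add_mulVec, dotProduct_add,
    dotProduct_add, dotProduct_add, e1, e2, e3, e4, e5, e6]
  ring

lemma sum_mulVec' {I K J : Type*} [Fintype J] (s : Finset K) (f : K → Matrix I J ℝ)
    (x : J → ℝ) : (∑ e ∈ s, f e) *ᵥ x = ∑ e ∈ s, f e *ᵥ x := by
  funext i
  simp only [Matrix.mulVec, dotProduct, Matrix.sum_apply, Finset.sum_apply,
    Finset.sum_mul]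
  exact Finset.sum_comm

lemma dotProduct_sum' {J K : Type*} [Fintype J] (s : Finset K) (x : J → ℝ) (f : K → J → ℝ) :
    x ⬝ᵥ (∑ e ∈ s, f e) = ∑ e ∈ s, x ⬝ᵥ f e := by
  simp only [dotProduct, Finset.sum_apply, Finset.mul_sum]
  exact Finset.sum_comm

lemma Q1_psd {N : ℕ} (E : Finset (Fin N × Fin N)) (n : Fin N × Fin N → ℕ)
    (w : (e : Fin N × Fin N) → Fin (n e) → ℝ) (x : Fin N → ℝ) :
    0 ≤ x ⬝ᵥ (Q1 E n w).mulVec x := by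
  unfold Q1
  rw [sum_mulVec', dotProduct_sum']
  refine Finset.sum_nonneg fun e _ => ?_
  rw [← Matrix.mulVec_mulVec, Matrix.dotProduct_mulVec, Matrix.vecMul_transpose]
  exact Finset.sum_nonneg fun i _ => mul_self_nonneg _

lemma trace_form {J α : Type*} [Fintype J] [Fintype α] (Q : Matrix J J ℝ) (M : Matrix α J ℝ) :
    ∑ c : α, (fun p => M c p) ⬝ᵥ Q.mulVec (fun q => M c q) = (Q * Mᵀ * M).trace := by
  simp only [Matrix.trace, Matrix.diag_apply, Matrix.mul_apply, Matrix.mulVec,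
    dotProduct, Matrix.transpose_apply, Finset.sum_mul, Finset.mul_sum]
  rw [Finset.sum_comm]
  refine Finset.sum_congr rfl fun p _ => ?_
  refine Finset.sum_congr rfl fun c _ => ?_
  refine Finset.sum_congr rfl fun q _ => ?_
  ring
/-- Let `A` be as above and `Q = AᵀQ₁A + VA + AᵀVᵀ + Q₂`. If `Q̄₁ᵀQ̄₁` is invertible,
then for each collection of 3×3 matrices `M₁,…,M_N` with stacked vectorization `r`, the
translation `t* = (A⊗I₃)r` minimizes `L(t, r)` over all `t` with `t₁ = 0` (and itself
satisfies `t₁* = 0`), with minimum value `trace(Q MᵀM)` for `M = [M₁,…,M_N]`. -/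
theorem stmt10 (N : ℕ) (hN : 1 ≤ N) (E : Finset (Fin N × Fin N))
    (hE : ∀ e ∈ E, e.1 ≠ e.2) (hEsym : ∀ e ∈ E, (e.2, e.1) ∉ E)
    (n : Fin N × Fin N → ℕ) (hn : ∀ e ∈ E, 1 ≤ n e)
    (w : (e : Fin N × Fin N) → Fin (n e) → ℝ)
    (hw : ∀ (e : Fin N × Fin N) (k : Fin (n e)), 0 ≤ w e k)
    (u v : (e : Fin N × Fin N) → Fin (n e) → Fin 3 → ℝ)
    (hinv : IsUnit ((Q1bar E n w)ᵀ * Q1bar E n w).det)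
    (Mb : Fin N → Matrix (Fin 3) (Fin 3) ℝ) :
    (∀ b : Fin 3,
      ((Amat E n w u v ⊗ₖ (1 : Matrix (Fin 3) (Fin 3) ℝ)).mulVec
          (fun p : (Fin N × Fin 3) × Fin 3 => Mb p.1.1 p.2 p.1.2))
        ((⟨0, by omega⟩ : Fin N), b) = 0) ∧
    (∀ t : Fin N × Fin 3 → ℝ, (∀ b : Fin 3, t ((⟨0, by omega⟩ : Fin N), b) = 0) →
      Lobj E n w u v
        ((Amat E n w u v ⊗ₖ (1 : Matrix (Fin 3) (Fin 3) ℝ)).mulVec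
          (fun p : (Fin N × Fin 3) × Fin 3 => Mb p.1.1 p.2 p.1.2))
        (fun p : (Fin N × Fin 3) × Fin 3 => Mb p.1.1 p.2 p.1.2) ≤
      Lobj E n w u v t (fun p : (Fin N × Fin 3) × Fin 3 => Mb p.1.1 p.2 p.1.2)) ∧
    Lobj E n w u v
        ((Amat E n w u v ⊗ₖ (1 : Matrix (Fin 3) (Fin 3) ℝ)).mulVec
          (fun p : (Fin N × Fin 3) × Fin 3 => Mb p.1.1 p.2 p.1.2))
        (fun p : (Fin N × Fin 3) × Fin 3 => Mb p.1.1 p.2 p.1.2) =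
      (((Amat E n w u v)ᵀ * Q1 E n w * Amat E n w u v +
          Vmat E n w u v * Amat E n w u v +
          (Amat E n w u v)ᵀ * (Vmat E n w u v)ᵀ + Q2 E n w u v) *
        (Matrix.of fun a (p : Fin N × Fin 3) => Mb p.1 a p.2)ᵀ *
        (Matrix.of fun a (p : Fin N × Fin 3) => Mb p.1 a p.2)).trace := by
  obtain ⟨m, rfl⟩ : ∃ m, N = m + 1 := ⟨N - 1, by omega⟩
  have hkey := key_eq E n w u v hinv
  have hsymm := Q1_symm E n w
  set r : (Fin (m+1) × Fin 3) × Fin 3 → ℝ := fun p => Mb p.1.1 p.2 p.1.2 with hr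
  set A := Amat E n w u v with hA
  have hA0 : ∀ p, A (⟨0, by omega⟩ : Fin (m+1)) p = 0 := by
    intro p
    rw [hA]
    unfold Amat
    simp
  have hts : ∀ (c : Fin 3) (i : Fin (m+1)),
      (A ⊗ₖ (1 : Matrix (Fin 3) (Fin 3) ℝ)).mulVec r (i, c)
        = A.mulVec (fun p => r (p, c)) i := fun c i => kron_mulVec3 A r i c
  have hL : ∀ t : Fin (m+1) × Fin 3 → ℝ,
      Lobj E n w u v t r = ∑ c : Fin 3,
        (((fun i => t (i, c)) - A.mulVec (fun p => r (p, c))) ⬝ᵥ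
            (Q1 E n w).mulVec ((fun i => t (i, c)) - A.mulVec (fun p => r (p, c)))
          + (fun p => r (p, c)) ⬝ᵥ
            ((Aᵀ * Q1 E n w * A + Vmat E n w u v * A + Aᵀ * (Vmat E n w u v)ᵀ
              + Q2 E n w u v).mulVec (fun p => r (p, c)))) := by
    intro t
    unfold Lobj
    rw [kron_quad3, kron_quad3, kron_quad3, Finset.mul_sum, ← Finset.sum_add_distrib,
      ← Finset.sum_add_distrib]
    refine Finset.sum_congr rfl fun c _ => ?_
    exact quad_identity (Q1 E n w) (Vmat E n w u v) (Q2 E n w u v) A hsymm hkey _ _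
  have htsL : Lobj E n w u v ((A ⊗ₖ (1 : Matrix (Fin 3) (Fin 3) ℝ)).mulVec r) r
      = ∑ c : Fin 3, (fun p => r (p, c)) ⬝ᵥ
          ((Aᵀ * Q1 E n w * A + Vmat E n w u v * A + Aᵀ * (Vmat E n w u v)ᵀ
            + Q2 E n w u v).mulVec (fun p => r (p, c))) := by
    rw [hL]
    refine Finset.sum_congr rfl fun c _ => ?_
    have hd : (fun i => (A ⊗ₖ (1 : Matrix (Fin 3) (Fin 3) ℝ)).mulVec r (i, c))
        - A.mulVec (fun p => r (p, c)) = 0 := by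
      funext i
      simp [hts c i]
    rw [hd]
    simp
  refine ⟨?_, ?_, ?_⟩
  · intro b
    rw [hts b]
    simp only [Matrix.mulVec, dotProduct]
    exact Finset.sum_eq_zero fun p _ => by rw [hA0 p, zero_mul]
  · intro t ht
    rw [htsL, hL t]
    refine Finset.sum_le_sum fun c _ => ?_
    have := Q1_psd E n w
      ((fun i => t (i, c)) - A.mulVec (fun p => r (p, c)))
    linarith
  · rw [htsL]
    exact trace_form _ (Matrix.of fun a (p : Fin (m+1) × Fin 3) => Mb p.1 a p.2)
end
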